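/- For any indexed red-black trees t₁ (color y₁, black height n₁, in-order traversal l₁) and t₂ (color y₂, black height n₂, in-order traversal l₂) and any key a, Join(t₁, a, t₂) is a valid red-black tree (of some color and some black height) whose in-order traversal is l₁ ++ [a] ++ l₂. -/
import Mathlib


/-- Node colors for red-black trees. -/
inductive Color where
  | red : Color
  | black : Color
deriving DecidableEq

/-- Plain binary trees with colored nodes. -/
inductive RBTree (α : Type) where
  | leaf : RBTree α
  | node : Color → RBTree α → α → RBTree α → RBTree α

namespace RBTree

variable {α : Type}

/-- The black height of a tree (computed along the left spine). -/
def blackHeight : RBTree α → ℕ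
  | leaf => 0
  | node Color.red l _ _ => blackHeight l
  | node Color.black l _ _ => blackHeight l + 1

/-- The color of the root; leaves count as black. -/
def rootColor : RBTree α → Color
  | leaf => Color.black
  | node c _ _ _ => c

/-- In-order traversal. -/
def inorder : RBTree α → List α
  | leaf => []
  | node _ l a r => inorder l ++ a :: inorder r

/-- Number of internal (key-carrying) nodes. -/
def size : RBTree α → ℕ
  | leaf => 0
  | node _ l _ r => size l + 1 + size r

/-- `IsRBT t y n` means `t` is a valid red-black tree with root color `y`
and black height `n`, mirroring the indexed inductive family `irbt`. -/
inductive IsRBT : RBTree α → Color → ℕ → Prop where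
  | leaf : IsRBT leaf Color.black 0
  | red {t₁ t₂ : RBTree α} {n : ℕ} (a : α) :
      IsRBT t₁ Color.black n → IsRBT t₂ Color.black n →
      IsRBT (node Color.red t₁ a t₂) Color.red n
  | black {t₁ t₂ : RBTree α} {y₁ y₂ : Color} {n : ℕ} (a : α) :
      IsRBT t₁ y₁ n → IsRBT t₂ y₂ n →
      IsRBT (node Color.black t₁ a t₂) Color.black (n + 1)

end RBTree
namespace RBTree

variable {α : Type}

/-- `IsARRBT t leftColor n` means `t` is an almost-right red-black tree with
black height `n`, where `leftColor` records the color of the left tree from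
which it was created; a red-red violation on the right is allowed only when
`leftColor` is red.  Mirrors the indexed inductive family `arrbt`. -/
inductive IsARRBT : RBTree α → Color → ℕ → Prop where
  | valid {t : RBTree α} {y : Color} {n : ℕ} (leftColor : Color) :
      IsRBT t y n → IsARRBT t leftColor n
  | violation {t₁ t₂ : RBTree α} {n : ℕ} (a : α) :
      IsRBT t₁ Color.black n → IsRBT t₂ Color.red n →
      IsARRBT (node Color.red t₁ a t₂) Color.red n

/-- The `JoinRight` algorithm of Blelloch et al.: attach `t₂` along the right
spine of `t₁`, rebalancing as necessary.  (The value returned when the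
precondition `blackHeight t₁ > blackHeight t₂` fails is immaterial.) -/
def joinRight : RBTree α → α → RBTree α → RBTree α
  | leaf, a, t₂ => node Color.red leaf a t₂
  | node Color.red t₁₁ a₁ t₁₂, a, t₂ =>
      -- Case I: recurse; valid or violation, the resulting tree is the same
      node Color.red t₁₁ a₁ (joinRight t₁₂ a t₂)
  | node Color.black t₁₁ a₁ t₁₂, a, t₂ =>
      if blackHeight (node Color.black t₁₁ a₁ t₁₂) = blackHeight t₂ + 1 then
        match t₂ with
        | node Color.red t₂₁ a₂ t₂₂ =>
            -- Case II
            node Color.red (node Color.black t₁₁ a₁ t₁₂) a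
              (node Color.black t₂₁ a₂ t₂₂)
        | t₂ =>
            match t₁₂ with
            | node Color.red t₁₂₁ a₁₂ t₁₂₂ =>
                -- Case III
                node Color.red (node Color.black t₁₁ a₁ t₁₂₁) a₁₂
                  (node Color.black t₁₂₂ a t₂)
            | t₁₂ =>
                -- Case IV
                node Color.black t₁₁ a₁ (node Color.red t₁₂ a t₂)
      else
        match joinRight t₁₂ a t₂ with
        | node Color.red t₁' a' (node Color.red t₂₁' a₂' t₂₂') =>
            -- Case VI: violation; rotate left
            node Color.red (node Color.black t₁₁ a₁ t₁') a'
              (node Color.black t₂₁' a₂' t₂₂')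
        | r =>
            -- Case V: valid
            node Color.black t₁₁ a₁ r

end RBTree
namespace RBTree

variable {α : Type}

/-- The symmetric `JoinLeft` algorithm: attach `t₁` along the left spine of
`t₂`, rebalancing as necessary. -/
def joinLeft : RBTree α → α → RBTree α → RBTree α
  | t₁, a, leaf => node Color.red t₁ a leaf
  | t₁, a, node Color.red t₂₁ a₂ t₂₂ =>
      node Color.red (joinLeft t₁ a t₂₁) a₂ t₂₂
  | t₁, a, node Color.black t₂₁ a₂ t₂₂ =>
      if blackHeight (node Color.black t₂₁ a₂ t₂₂) = blackHeight t₁ + 1 then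
        match t₁ with
        | node Color.red t₁₁ a₁ t₁₂ =>
            node Color.red (node Color.black t₁₁ a₁ t₁₂) a
              (node Color.black t₂₁ a₂ t₂₂)
        | t₁ =>
            match t₂₁ with
            | node Color.red t₂₁₁ a₂₁ t₂₁₂ =>
                node Color.red (node Color.black t₁ a t₂₁₁) a₂₁
                  (node Color.black t₂₁₂ a₂ t₂₂)
            | t₂₁ =>
                node Color.black (node Color.red t₁ a t₂₁) a₂ t₂₂
      else
        match joinLeft t₁ a t₂₁ with
        | node Color.red (node Color.red t₁₁' a₁' t₁₂') a' t₂' =>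
            node Color.red (node Color.black t₁₁' a₁' t₁₂') a'
              (node Color.black t₂' a₂ t₂₂)
        | r =>
            node Color.black r a₂ t₂₂

/-- The `Join` algorithm of Blelloch et al. on red-black trees. -/
def join (t₁ : RBTree α) (a : α) (t₂ : RBTree α) : RBTree α :=
  if blackHeight t₂ < blackHeight t₁ then
    match joinRight t₁ a t₂ with
    | node Color.red t₁' a' (node Color.red t₂₁' a₂' t₂₂') =>
        -- red-red violation on the right: recolor the root black
        node Color.black t₁' a' (node Color.red t₂₁' a₂' t₂₂')
    | t' => t'
  else if blackHeight t₁ < blackHeight t₂ then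
    match joinLeft t₁ a t₂ with
    | node Color.red (node Color.red t₁₁' a₁' t₁₂') a' t₂' =>
        -- red-red violation on the left: recolor the root black
        node Color.black (node Color.red t₁₁' a₁' t₁₂') a' t₂'
    | t' => t'
  else
    if rootColor t₁ = Color.black ∧ rootColor t₂ = Color.black then
      node Color.red t₁ a t₂
    else
      node Color.black t₁ a t₂

end RBTree
namespace RBTree
variable {α : Type}

lemma IsRBT.bh {t : RBTree α} {y : Color} {n : ℕ} (h : IsRBT t y n) :
    t.blackHeight = n := by
  induction h with
  | leaf => rfl
  | red a h1 h2 ih1 ih2 => simpa [blackHeight] using ih1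
  | black a h1 h2 ih1 ih2 => simp [blackHeight, ih1]

lemma IsRBT.rc {t : RBTree α} {y : Color} {n : ℕ} (h : IsRBT t y n) :
    t.rootColor = y := by
  cases h <;> rfl

/-- Almost-left red-black trees (mirror of `IsARRBT`). -/
inductive IsALRBT : RBTree α → Color → ℕ → Prop where
  | valid {t : RBTree α} {y : Color} {n : ℕ} (rightColor : Color) :
      IsRBT t y n → IsALRBT t rightColor n
  | violation {t₁ t₂ : RBTree α} {n : ℕ} (a : α) :
      IsRBT t₁ Color.red n → IsRBT t₂ Color.black n →
      IsALRBT (node Color.red t₁ a t₂) Color.red n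

lemma jr_red (t₁₁ : RBTree α) (a₁ : α) (t₁₂ : RBTree α) (a : α) (t₂ : RBTree α) :
    joinRight (node Color.red t₁₁ a₁ t₁₂) a t₂ =
      node Color.red t₁₁ a₁ (joinRight t₁₂ a t₂) := by
  rw [joinRight.eq_def]

lemma jr_black (t₁₁ : RBTree α) (a₁ : α) (t₁₂ : RBTree α) (a : α) (t₂ : RBTree α) :
    joinRight (node Color.black t₁₁ a₁ t₁₂) a t₂ =
      if blackHeight (node Color.black t₁₁ a₁ t₁₂) = blackHeight t₂ + 1 then
        match t₂ with
        | node Color.red t₂₁ a₂ t₂₂ =>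
            node Color.red (node Color.black t₁₁ a₁ t₁₂) a
              (node Color.black t₂₁ a₂ t₂₂)
        | t₂ =>
            match t₁₂ with
            | node Color.red t₁₂₁ a₁₂ t₁₂₂ =>
                node Color.red (node Color.black t₁₁ a₁ t₁₂₁) a₁₂
                  (node Color.black t₁₂₂ a t₂)
            | t₁₂ =>
                node Color.black t₁₁ a₁ (node Color.red t₁₂ a t₂)
      else
        match joinRight t₁₂ a t₂ with
        | node Color.red t₁' a' (node Color.red t₂₁' a₂' t₂₂') =>
            node Color.red (node Color.black t₁₁ a₁ t₁') a'
              (node Color.black t₂₁' a₂' t₂₂')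
        | r =>
            node Color.black t₁₁ a₁ r := by
  rw [joinRight.eq_def]

lemma joinRight_correct {y₁ y₂ : Color} {n₁ n₂ : ℕ} (t₁ : RBTree α) (a : α)
    (t₂ : RBTree α) (h₁ : IsRBT t₁ y₁ n₁) (h₂ : IsRBT t₂ y₂ n₂) (hlt : n₂ < n₁) :
    IsARRBT (joinRight t₁ a t₂) y₁ n₁ ∧
    (joinRight t₁ a t₂).inorder = t₁.inorder ++ a :: t₂.inorder := by
  induction h₁ with
  | leaf => omega
  | @red t₁₁ t₁₂ n a₁ hl hr ihl ihr =>
    obtain ⟨ihA, ihI⟩ := ihr hlt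
    rw [jr_red]
    revert ihA ihI
    generalize joinRight t₁₂ a t₂ = r
    intro ihA ihI
    constructor
    · rcases ihA with ⟨_, hv⟩
      cases hv with
      | leaf =>
        exact IsARRBT.valid _ (IsRBT.red a₁ hl IsRBT.leaf)
      | red b hu hv' =>
        exact IsARRBT.violation a₁ hl (IsRBT.red b hu hv')
      | black b hu hv' =>
        exact IsARRBT.valid _ (IsRBT.red a₁ hl (IsRBT.black b hu hv'))
    · simp [inorder, ihI]
  | @black t₁₁ t₁₂ y₁₁ y₁₂ n a₁ hl hr ihl ihr =>
    have hb1 : blackHeight (node Color.black t₁₁ a₁ t₁₂) = n + 1 := by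
      simp [blackHeight, hl.bh]
    have hb2 : t₂.blackHeight = n₂ := h₂.bh
    by_cases hn : n₂ = n
    · subst hn
      have hcond : blackHeight (node Color.black t₁₁ a₁ t₁₂) = blackHeight t₂ + 1 := by
        rw [hb1, hb2]
      rw [jr_black, if_pos hcond]
      rcases t₂ with _ | ⟨c₂, t₂₁, a₂, t₂₂⟩
      · -- t₂ = leaf, so n₂ = 0
        cases h₂
        rcases t₁₂ with _ | ⟨c₁₂, u, b, v⟩
        · cases hr
          exact ⟨IsARRBT.valid _ (IsRBT.black a₁ hl (IsRBT.red a IsRBT.leaf IsRBT.leaf)),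
            by simp [inorder]⟩
        · cases c₁₂
          · cases hr with
            | red b hu hv =>
              exact ⟨IsARRBT.valid _ (IsRBT.red b (IsRBT.black a₁ hl hu)
                (IsRBT.black a hv IsRBT.leaf)), by simp [inorder]⟩
          · cases hr
      · cases c₂
        · -- Case II
          cases h₂ with
          | red a₂ h21 h22 =>
            exact ⟨IsARRBT.valid _ (IsRBT.red a (IsRBT.black a₁ hl hr)
              (IsRBT.black a₂ h21 h22)), by simp [inorder]⟩
        · -- t₂ black
          rcases t₁₂ with _ | ⟨c₁₂, u, b, v⟩
          · cases hr
            cases h₂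
          · cases c₁₂
            · -- Case III
              cases hr with
              | red b hu hv =>
                have hy₂ : y₂ = Color.black := by
                  have := h₂.rc; simpa [rootColor] using this.symm
                subst hy₂
                exact ⟨IsARRBT.valid _ (IsRBT.red b (IsRBT.black a₁ hl hu)
                  (IsRBT.black a hv h₂)), by simp [inorder]⟩
            · -- Case IV
              have hy₁₂ : y₁₂ = Color.black := by
                have := hr.rc; simpa [rootColor] using this.symm
              have hy₂ : y₂ = Color.black := by
                have := h₂.rc; simpa [rootColor] using this.symm
              subst hy₁₂; subst hy₂
              exact ⟨IsARRBT.valid _ (IsRBT.black a₁ hl (IsRBT.red a hr h₂)),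
                by simp [inorder]⟩
    · obtain ⟨ihA, ihI⟩ := ihr (by omega)
      have hcond : ¬ blackHeight (node Color.black t₁₁ a₁ t₁₂) = blackHeight t₂ + 1 := by
        rw [hb1, hb2]; omega
      rw [jr_black, if_neg hcond]
      have hn' : n₂ < n := by omega
      revert ihA ihI
      generalize joinRight t₁₂ a t₂ = r
      intro ihA ihI
      rcases r with _ | ⟨cr, u, b, v⟩
      · rcases ihA with ⟨_, hv⟩; cases hv; omega
      · cases cr
        · rcases v with _ | ⟨cv, v₁, c, v₂⟩
          · -- red u b leaf: catch-all
            rcases ihA with ⟨_, hv⟩ | ⟨b, hu, hred⟩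
            · exact ⟨IsARRBT.valid _ (IsRBT.black a₁ hl hv),
                by simp [inorder] at ihI ⊢; simp [ihI]⟩
            · cases hred
          · cases cv
            · -- Case VI
              rcases ihA with ⟨_, hv⟩ | ⟨_, hu, hred⟩
              · cases hv with
                | red _ hu hv' => cases hv'
              · cases hred with
                | red c h1 h2 =>
                  exact ⟨IsARRBT.valid _ (IsRBT.red b (IsRBT.black a₁ hl hu)
                    (IsRBT.black c h1 h2)),
                    by simp [inorder] at ihI ⊢; simp [ihI]⟩
            · -- red u b (node black ...): catch-all
              rcases ihA with ⟨_, hv⟩ | ⟨_, hu, hred⟩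
              · exact ⟨IsARRBT.valid _ (IsRBT.black a₁ hl hv),
                  by simp [inorder] at ihI ⊢; simp [ihI]⟩
              · cases hred
        · -- node black: catch-all
          rcases ihA with ⟨_, hv⟩
          exact ⟨IsARRBT.valid _ (IsRBT.black a₁ hl hv),
            by simp [inorder] at ihI ⊢; simp [ihI]⟩

end RBTree

namespace RBTree
variable {α : Type}

lemma jl_red (t₁ : RBTree α) (a : α) (t₂₁ : RBTree α) (a₂ : α) (t₂₂ : RBTree α) :
    joinLeft t₁ a (node Color.red t₂₁ a₂ t₂₂) =
      node Color.red (joinLeft t₁ a t₂₁) a₂ t₂₂ := by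
  rw [joinLeft.eq_def]

lemma jl_black (t₁ : RBTree α) (a : α) (t₂₁ : RBTree α) (a₂ : α) (t₂₂ : RBTree α) :
    joinLeft t₁ a (node Color.black t₂₁ a₂ t₂₂) =
      if blackHeight (node Color.black t₂₁ a₂ t₂₂) = blackHeight t₁ + 1 then
        match t₁ with
        | node Color.red t₁₁ a₁ t₁₂ =>
            node Color.red (node Color.black t₁₁ a₁ t₁₂) a
              (node Color.black t₂₁ a₂ t₂₂)
        | t₁ =>
            match t₂₁ with
            | node Color.red t₂₁₁ a₂₁ t₂₁₂ =>
                node Color.red (node Color.black t₁ a t₂₁₁) a₂₁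
                  (node Color.black t₂₁₂ a₂ t₂₂)
            | t₂₁ =>
                node Color.black (node Color.red t₁ a t₂₁) a₂ t₂₂
      else
        match joinLeft t₁ a t₂₁ with
        | node Color.red (node Color.red t₁₁' a₁' t₁₂') a' t₂' =>
            node Color.red (node Color.black t₁₁' a₁' t₁₂') a'
              (node Color.black t₂' a₂ t₂₂)
        | r =>
            node Color.black r a₂ t₂₂ := by
  rw [joinLeft.eq_def]

lemma joinLeft_correct {y₁ y₂ : Color} {n₁ n₂ : ℕ} (t₁ : RBTree α) (a : α)
    (t₂ : RBTree α) (h₁ : IsRBT t₁ y₁ n₁) (h₂ : IsRBT t₂ y₂ n₂) (hlt : n₁ < n₂) :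
    IsALRBT (joinLeft t₁ a t₂) y₂ n₂ ∧
    (joinLeft t₁ a t₂).inorder = t₁.inorder ++ a :: t₂.inorder := by
  induction h₂ with
  | leaf => omega
  | @red t₂₁ t₂₂ n a₂ hl hr ihl ihr =>
    obtain ⟨ihA, ihI⟩ := ihl hlt
    rw [jl_red]
    revert ihA ihI
    generalize joinLeft t₁ a t₂₁ = r
    intro ihA ihI
    constructor
    · rcases ihA with ⟨_, hv⟩
      cases hv with
      | leaf =>
        exact IsALRBT.valid _ (IsRBT.red a₂ IsRBT.leaf hr)
      | red b hu hv' =>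
        exact IsALRBT.violation a₂ (IsRBT.red b hu hv') hr
      | black b hu hv' =>
        exact IsALRBT.valid _ (IsRBT.red a₂ (IsRBT.black b hu hv') hr)
    · simp [inorder, ihI]
  | @black t₂₁ t₂₂ y₂₁ y₂₂ n a₂ hl hr ihl ihr =>
    have hb1 : blackHeight (node Color.black t₂₁ a₂ t₂₂) = n + 1 := by
      simp [blackHeight, hl.bh]
    have hb2 : t₁.blackHeight = n₁ := h₁.bh
    by_cases hn : n₁ = n
    · subst hn
      have hcond : blackHeight (node Color.black t₂₁ a₂ t₂₂) = blackHeight t₁ + 1 := by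
        rw [hb1, hb2]
      rw [jl_black, if_pos hcond]
      rcases t₁ with _ | ⟨c₁, t₁₁, a₁, t₁₂⟩
      · -- t₁ = leaf, so n = 0
        cases h₁
        rcases t₂₁ with _ | ⟨c₂₁, u, b, v⟩
        · cases hl
          exact ⟨IsALRBT.valid _ (IsRBT.black a₂ (IsRBT.red a IsRBT.leaf IsRBT.leaf) hr),
            by simp [inorder]⟩
        · cases c₂₁
          · cases hl with
            | red b hu hv =>
              exact ⟨IsALRBT.valid _ (IsRBT.red b (IsRBT.black a IsRBT.leaf hu)
                (IsRBT.black a₂ hv hr)), by simp [inorder]⟩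
          · cases hl
      · cases c₁
        · -- Case II mirror
          cases h₁ with
          | red a₁ h11 h12 =>
            exact ⟨IsALRBT.valid _ (IsRBT.red a (IsRBT.black a₁ h11 h12)
              (IsRBT.black a₂ hl hr)), by simp [inorder]⟩
        · -- t₁ black
          rcases t₂₁ with _ | ⟨c₂₁, u, b, v⟩
          · cases hl
            cases h₁
          · cases c₂₁
            · -- Case III mirror
              cases hl with
              | red b hu hv =>
                have hy₁ : y₁ = Color.black := by
                  have := h₁.rc; simpa [rootColor] using this.symm
                subst hy₁
                exact ⟨IsALRBT.valid _ (IsRBT.red b (IsRBT.black a h₁ hu)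
                  (IsRBT.black a₂ hv hr)), by simp [inorder]⟩
            · -- Case IV mirror
              have hy₂₁ : y₂₁ = Color.black := by
                have := hl.rc; simpa [rootColor] using this.symm
              have hy₁ : y₁ = Color.black := by
                have := h₁.rc; simpa [rootColor] using this.symm
              subst hy₂₁; subst hy₁
              exact ⟨IsALRBT.valid _ (IsRBT.black a₂ (IsRBT.red a h₁ hl) hr),
                by simp [inorder]⟩
    · obtain ⟨ihA, ihI⟩ := ihl (by omega)
      have hcond : ¬ blackHeight (node Color.black t₂₁ a₂ t₂₂) = blackHeight t₁ + 1 := by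
        rw [hb1, hb2]; omega
      rw [jl_black, if_neg hcond]
      revert ihA ihI
      generalize joinLeft t₁ a t₂₁ = r
      intro ihA ihI
      rcases r with _ | ⟨cr, u, b, v⟩
      · rcases ihA with ⟨_, hv⟩; cases hv; omega
      · cases cr
        · rcases u with _ | ⟨cu, u₁, c, u₂⟩
          · -- red leaf b v : catch-all
            rcases ihA with ⟨_, hv⟩ | ⟨_, hred, hu⟩
            · exact ⟨IsALRBT.valid _ (IsRBT.black a₂ hv hr),
                by simpa [inorder] using congrArg (fun l => l ++ a₂ :: t₂₂.inorder) ihI⟩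
            · cases hred
          · cases cu
            · -- Case VI mirror
              rcases ihA with ⟨_, hv⟩ | ⟨_, hred, hu⟩
              · cases hv with
                | red _ hv' hu' => cases hv'
              · cases hred with
                | red c h1 h2 =>
                  exact ⟨IsALRBT.valid _ (IsRBT.red b (IsRBT.black c h1 h2)
                    (IsRBT.black a₂ hu hr)),
                    by simpa [inorder] using congrArg (fun l => l ++ a₂ :: t₂₂.inorder) ihI⟩
            · -- red (node black ...) b v : catch-all
              rcases ihA with ⟨_, hv⟩ | ⟨_, hred, hu⟩
              · exact ⟨IsALRBT.valid _ (IsRBT.black a₂ hv hr),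
                  by simpa [inorder] using congrArg (fun l => l ++ a₂ :: t₂₂.inorder) ihI⟩
              · cases hred
        · -- node black: catch-all
          rcases ihA with ⟨_, hv⟩
          exact ⟨IsALRBT.valid _ (IsRBT.black a₂ hv hr),
            by simpa [inorder] using congrArg (fun l => l ++ a₂ :: t₂₂.inorder) ihI⟩

end RBTree

/-- **Correctness of Join.**  For any indexed red-black trees `t₁` (color
`y₁`, black height `n₁`, in-order traversal `l₁`) and `t₂` (color `y₂`, black
height `n₂`, in-order traversal `l₂`) and any key `a`, `Join(t₁, a, t₂)` is a
valid red-black tree (of some color and some black height) whose in-order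
traversal is `l₁ ++ a :: l₂`. -/
theorem join_correct {α : Type} {y₁ y₂ : Color} {n₁ n₂ : ℕ} {l₁ l₂ : List α}
    (t₁ : RBTree α) (a : α) (t₂ : RBTree α)
    (h₁ : RBTree.IsRBT t₁ y₁ n₁) (hl₁ : t₁.inorder = l₁)
    (h₂ : RBTree.IsRBT t₂ y₂ n₂) (hl₂ : t₂.inorder = l₂) :
    (∃ (y : Color) (n : ℕ), RBTree.IsRBT (RBTree.join t₁ a t₂) y n) ∧
    (RBTree.join t₁ a t₂).inorder = l₁ ++ a :: l₂ := by
  subst hl₁; subst hl₂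
  rw [RBTree.join.eq_def, h₁.bh, h₂.bh]
  rcases lt_trichotomy n₂ n₁ with hgt | heq | hlt
  · rw [if_pos hgt]
    obtain ⟨hA, hI⟩ := RBTree.joinRight_correct t₁ a t₂ h₁ h₂ hgt
    revert hA hI
    generalize RBTree.joinRight t₁ a t₂ = r
    intro hA hI
    rcases r with _ | ⟨cr, u, b, v⟩
    · rcases hA with ⟨y', hv⟩
      exact ⟨⟨_, _, hv⟩, hI⟩
    · cases cr
      · rcases v with _ | ⟨cv, v₁, c, v₂⟩
        · rcases hA with ⟨y', hv⟩ | ⟨_, hu, hred⟩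
          · exact ⟨⟨_, _, hv⟩, hI⟩
          · cases hred
        · cases cv
          · rcases hA with ⟨y', hv⟩ | ⟨_, hu, hred⟩
            · cases hv with
              | red _ h1 h2 => cases h2
            · cases hred with
              | red c hc1 hc2 =>
                exact ⟨⟨_, _, RBTree.IsRBT.black b hu (RBTree.IsRBT.red c hc1 hc2)⟩,
                  by simpa [RBTree.inorder] using hI⟩
          · rcases hA with ⟨y', hv⟩ | ⟨_, hu, hred⟩
            · exact ⟨⟨_, _, hv⟩, hI⟩
            · cases hred
      · rcases hA with ⟨y', hv⟩
        exact ⟨⟨_, _, hv⟩, hI⟩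
  · subst heq
    rw [if_neg (lt_irrefl _), if_neg (lt_irrefl _)]
    by_cases hc : RBTree.rootColor t₁ = Color.black ∧ RBTree.rootColor t₂ = Color.black
    · rw [if_pos hc]
      have hy₁ : y₁ = Color.black := by rw [← h₁.rc, hc.1]
      have hy₂ : y₂ = Color.black := by rw [← h₂.rc, hc.2]
      subst hy₁; subst hy₂
      exact ⟨⟨_, _, RBTree.IsRBT.red a h₁ h₂⟩, by simp [RBTree.inorder]⟩
    · rw [if_neg hc]
      exact ⟨⟨_, _, RBTree.IsRBT.black a h₁ h₂⟩, by simp [RBTree.inorder]⟩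
  · rw [if_neg (by omega), if_pos hlt]
    obtain ⟨hA, hI⟩ := RBTree.joinLeft_correct t₁ a t₂ h₁ h₂ hlt
    revert hA hI
    generalize RBTree.joinLeft t₁ a t₂ = r
    intro hA hI
    rcases r with _ | ⟨cr, u, b, v⟩
    · rcases hA with ⟨y', hv⟩
      exact ⟨⟨_, _, hv⟩, hI⟩
    · cases cr
      · rcases u with _ | ⟨cu, u₁, c, u₂⟩
        · rcases hA with ⟨y', hv⟩ | ⟨_, hred, hu⟩
          · exact ⟨⟨_, _, hv⟩, hI⟩
          · cases hred
        · cases cu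
          · rcases hA with ⟨y', hv⟩ | ⟨_, hred, hu⟩
            · cases hv with
              | red _ h1 h2 => cases h1
            · cases hred with
              | red c hc1 hc2 =>
                exact ⟨⟨_, _, RBTree.IsRBT.black b (RBTree.IsRBT.red c hc1 hc2) hu⟩,
                  by simpa [RBTree.inorder] using hI⟩
          · rcases hA with ⟨y', hv⟩ | ⟨_, hred, hu⟩
            · exact ⟨⟨_, _, hv⟩, hI⟩
            · cases hred
      · rcases hA with ⟨y', hv⟩
        exact ⟨⟨_, _, hv⟩, hI⟩
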